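/- arXiv:1907.03093 — 6 statements merged into one kernel-verified Lean document; each statement's English description precedes it below -/
import Mathlib

section
/- Suppose ac − b² ≠ 0. Then ω* solves the mean-variance optimisation problem: for every feasible portfolio ω ∈ ℝⁿ (i.e. 𝟙ᵀω = 1 and μᵀω = μ₀), one has ω*ᵀΣω* ≤ ωᵀΣω. -/
/-!
Since `Σ ω* = α 𝟙 + β μ` lies in the span of the two constraint vectors, and `ω*` is itself
feasible (the coefficients solve the 2×2 system with Gram matrix `[[a, b], [b, c]]`),
`Σ ω*` is orthogonal to `ω - ω*` for every feasible `ω`. The cross term of the quadratic form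
therefore vanishes: `ωᵀΣω = ω*ᵀΣω* + (ω - ω*)ᵀΣ(ω - ω*) ≥ ω*ᵀΣω*`.
-/

open Matrix

variable {ι : Type*} [Fintype ι]

lemma Matrix.IsSymm.dotProduct_mulVec_comm {R : Type*} [CommSemiring R] {A : Matrix ι ι R}
    (hA : A.IsSymm) (u v : ι → R) : u ⬝ᵥ (A *ᵥ v) = v ⬝ᵥ (A *ᵥ u) := by
  rw [dotProduct_mulVec, ← mulVec_transpose, hA.eq, dotProduct_comm]

lemma Matrix.PosSemidef.dotProduct_mulVec_le_of_mulVec_dotProduct_sub_eq_zero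
    {S : Matrix ι ι ℝ} (hS : S.PosSemidef) {x y : ι → ℝ} (h : (S *ᵥ x) ⬝ᵥ (y - x) = 0) :
    x ⬝ᵥ (S *ᵥ x) ≤ y ⬝ᵥ (S *ᵥ y) := by
  set d := y - x
  have hsymm : S.IsSymm := hS.isHermitian
  have hd : 0 ≤ d ⬝ᵥ (S *ᵥ d) := by simpa using hS.dotProduct_mulVec_nonneg d
  have hexpand : y ⬝ᵥ (S *ᵥ y) = x ⬝ᵥ (S *ᵥ x) + 2 * ((S *ᵥ x) ⬝ᵥ d) + d ⬝ᵥ (S *ᵥ d) := by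
    rw [show y = x + d from (add_sub_cancel x y).symm, mulVec_add, dotProduct_add,
      add_dotProduct, add_dotProduct, hsymm.dotProduct_mulVec_comm x d, dotProduct_comm d (S *ᵥ x)]
    ring
  rw [hexpand, h]
  linarith

lemma Matrix.mulVec_mulVec_nonsing_inv {R : Type*} [CommRing R] [DecidableEq ι]
    {S : Matrix ι ι R} (hS : IsUnit S.det) (v : ι → R) : S *ᵥ (S⁻¹ *ᵥ v) = v := by
  rw [mulVec_mulVec, mul_nonsing_inv S hS, one_mulVec]

lemma cramer_two_by_two {K : Type*} [Field K] {a b c μ₀ : K} (hdet : a * c - b ^ 2 ≠ 0) :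
    (c - b * μ₀) / (a * c - b ^ 2) * a + (a * μ₀ - b) / (a * c - b ^ 2) * b = 1 ∧
      (c - b * μ₀) / (a * c - b ^ 2) * b + (a * μ₀ - b) / (a * c - b ^ 2) * c = μ₀ := by
  constructor <;> rw [div_mul_eq_mul_div, div_mul_eq_mul_div, ← add_div, div_eq_iff hdet] <;> ring

theorem mvo_candidate_optimal_general (n : ℕ)
    (S : Matrix (Fin n) (Fin n) ℝ) (hS : S.PosDef)
    (μ : Fin n → ℝ) (μ₀ : ℝ)
    (a b c : ℝ)
    (ha : a = (1 : Fin n → ℝ) ⬝ᵥ (S⁻¹ *ᵥ (1 : Fin n → ℝ)))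
    (hb : b = (1 : Fin n → ℝ) ⬝ᵥ (S⁻¹ *ᵥ μ))
    (hc : c = μ ⬝ᵥ (S⁻¹ *ᵥ μ))
    (hdet : a * c - b ^ 2 ≠ 0)
    (ωstar : Fin n → ℝ)
    (hωstar : ωstar = ((c - b * μ₀) / (a * c - b ^ 2)) • (S⁻¹ *ᵥ (1 : Fin n → ℝ))
            + ((a * μ₀ - b) / (a * c - b ^ 2)) • (S⁻¹ *ᵥ μ)) :
    ∀ ω : Fin n → ℝ, (1 : Fin n → ℝ) ⬝ᵥ ω = 1 → μ ⬝ᵥ ω = μ₀ →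
      ωstar ⬝ᵥ (S *ᵥ ωstar) ≤ ω ⬝ᵥ (S *ᵥ ω) := by
  intro ω hω₁ hωμ
  have hinv_symm : S⁻¹.IsSymm := hS.isHermitian.inv
  have hb' : μ ⬝ᵥ (S⁻¹ *ᵥ 1) = b := by rw [hb, hinv_symm.dotProduct_mulVec_comm]
  obtain ⟨hstar₁, hstarμ⟩ := cramer_two_by_two (μ₀ := μ₀) hdet
  have hfeas₁ : (1 : Fin n → ℝ) ⬝ᵥ ωstar = 1 := by
    simpa only [hωstar, dotProduct_add, dotProduct_smul, smul_eq_mul, ← ha, ← hb] using hstar₁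
  have hfeasμ : μ ⬝ᵥ ωstar = μ₀ := by
    simpa only [hωstar, dotProduct_add, dotProduct_smul, smul_eq_mul, hb', ← hc] using hstarμ
  have hgrad : S *ᵥ ωstar = ((c - b * μ₀) / (a * c - b ^ 2)) • 1
      + ((a * μ₀ - b) / (a * c - b ^ 2)) • μ := by
    simp only [hωstar, mulVec_add, mulVec_smul,
      mulVec_mulVec_nonsing_inv hS.det_pos.ne'.isUnit]
  refine hS.posSemidef.dotProduct_mulVec_le_of_mulVec_dotProduct_sub_eq_zero ?_
  simp [hgrad, add_dotProduct, dotProduct_sub, hω₁, hωμ, hfeas₁, hfeasμ]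

/-- The candidate portfolio `ω*` solves the mean-variance optimisation problem:
for every feasible portfolio `ω` (i.e. `𝟙ᵀω = 1`, `μᵀω = μ₀`),
`ω*ᵀ Σ ω* ≤ ωᵀ Σ ω`. -/
theorem mvo_candidate_optimal (n : ℕ) (hn : 1 ≤ n)
    (S : Matrix (Fin n) (Fin n) ℝ) (hS : S.PosDef)
    (μ : Fin n → ℝ) (μ₀ : ℝ)
    (a b c : ℝ)
    (ha : a = (1 : Fin n → ℝ) ⬝ᵥ (S⁻¹ *ᵥ (1 : Fin n → ℝ)))
    (hb : b = (1 : Fin n → ℝ) ⬝ᵥ (S⁻¹ *ᵥ μ))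
    (hc : c = μ ⬝ᵥ (S⁻¹ *ᵥ μ))
    (hdet : a * c - b ^ 2 ≠ 0)
    (ωstar : Fin n → ℝ)
    (hωstar : ωstar = ((c - b * μ₀) / (a * c - b ^ 2)) • (S⁻¹ *ᵥ (1 : Fin n → ℝ))
            + ((a * μ₀ - b) / (a * c - b ^ 2)) • (S⁻¹ *ᵥ μ)) :
    ∀ ω : Fin n → ℝ, (1 : Fin n → ℝ) ⬝ᵥ ω = 1 → μ ⬝ᵥ ω = μ₀ →
      ωstar ⬝ᵥ (S *ᵥ ωstar) ≤ ω ⬝ᵥ (S *ᵥ ω) :=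
  mvo_candidate_optimal_general n S hS μ μ₀ a b c ha hb hc hdet ωstar hωstar
end

section
/- Suppose ac − b² ≠ 0. Then ω* is the unique minimiser of the portfolio variance among feasible portfolios: for every feasible ω ∈ ℝⁿ with ω ≠ ω*, one has ω*ᵀΣω* < ωᵀΣω. -/
/-!
The candidate satisfies both constraints (the weights solve the 2×2 system with matrix
`[[a, b], [b, c]]`) and `Σ ω* = λ 𝟙 + γ μ` is a combination of the constraint normals, so
`Σ ω*` is orthogonal to `ω - ω*` for every feasible `ω`. Expanding the quadratic form around
`ω*` then gives `ωᵀΣω = ω*ᵀΣω* + (ω - ω*)ᵀΣ(ω - ω*)`, and the last term is positive.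
-/

open Matrix

namespace Matrix

variable {ι : Type*} [Fintype ι]

lemma dotProduct_mulVec_comm_of_isSymm {R : Type*} [CommSemiring R] {M : Matrix ι ι R}
    (hM : M.IsSymm) (x y : ι → R) : x ⬝ᵥ (M *ᵥ y) = y ⬝ᵥ (M *ᵥ x) := by
  rw [dotProduct_mulVec, ← mulVec_transpose, hM.eq, dotProduct_comm]

lemma dotProduct_mulVec_add_self_of_isSymm {R : Type*} [CommRing R] {M : Matrix ι ι R}
    (hM : M.IsSymm) (x d : ι → R) :
    (x + d) ⬝ᵥ (M *ᵥ (x + d)) = x ⬝ᵥ (M *ᵥ x) + 2 * (d ⬝ᵥ (M *ᵥ x)) + d ⬝ᵥ (M *ᵥ d) := by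
  simp only [mulVec_add, add_dotProduct, dotProduct_add]
  rw [dotProduct_mulVec_comm_of_isSymm hM x d]
  ring

namespace PosDef

variable {S : Matrix ι ι ℝ}

lemma dotProduct_mulVec_lt_of_sub_dotProduct_mulVec_eq_zero (hS : S.PosDef) {x y : ι → ℝ}
    (horth : (y - x) ⬝ᵥ (S *ᵥ x) = 0) (hne : y ≠ x) :
    x ⬝ᵥ (S *ᵥ x) < y ⬝ᵥ (S *ᵥ y) := by
  have hpos : 0 < (y - x) ⬝ᵥ (S *ᵥ (y - x)) := hS.dotProduct_mulVec_pos (sub_ne_zero.mpr hne)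
  have hexpand := dotProduct_mulVec_add_self_of_isSymm (isHermitian_iff_isSymm.mp hS.isHermitian) x
    (y - x)
  rw [add_sub_cancel, horth] at hexpand
  linarith

lemma dotProduct_mulVec_lt_of_mulVec_eq_smul_add_smul (hS : S.PosDef) {x y u v : ι → ℝ}
    {lam gam : ℝ} (hgrad : S *ᵥ x = lam • u + gam • v) (hu : u ⬝ᵥ y = u ⬝ᵥ x)
    (hv : v ⬝ᵥ y = v ⬝ᵥ x) (hne : y ≠ x) :
    x ⬝ᵥ (S *ᵥ x) < y ⬝ᵥ (S *ᵥ y) := by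
  refine hS.dotProduct_mulVec_lt_of_sub_dotProduct_mulVec_eq_zero ?_ hne
  rw [hgrad, dotProduct_add, dotProduct_smul, dotProduct_smul, sub_dotProduct, sub_dotProduct,
    dotProduct_comm _ u, dotProduct_comm _ u, dotProduct_comm _ v, dotProduct_comm _ v, hu, hv]
  simp

end PosDef

end Matrix

theorem mvo_candidate_unique_min_general (n : ℕ)
    (S : Matrix (Fin n) (Fin n) ℝ) (hS : S.PosDef)
    (μ : Fin n → ℝ) (μ₀ : ℝ)
    (a b c : ℝ)
    (ha : a = (1 : Fin n → ℝ) ⬝ᵥ (S⁻¹ *ᵥ (1 : Fin n → ℝ)))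
    (hb : b = (1 : Fin n → ℝ) ⬝ᵥ (S⁻¹ *ᵥ μ))
    (hc : c = μ ⬝ᵥ (S⁻¹ *ᵥ μ))
    (hdet : a * c - b ^ 2 ≠ 0)
    (ωstar : Fin n → ℝ)
    (hωstar : ωstar = ((c - b * μ₀) / (a * c - b ^ 2)) • (S⁻¹ *ᵥ (1 : Fin n → ℝ))
            + ((a * μ₀ - b) / (a * c - b ^ 2)) • (S⁻¹ *ᵥ μ)) :
    ∀ ω : Fin n → ℝ, (1 : Fin n → ℝ) ⬝ᵥ ω = 1 → μ ⬝ᵥ ω = μ₀ → ω ≠ ωstar →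
      ωstar ⬝ᵥ (S *ᵥ ωstar) < ω ⬝ᵥ (S *ᵥ ω) := by
  intro ω hω1 hωμ hne
  have hSinv : S * S⁻¹ = 1 := mul_nonsing_inv S (isUnit_iff_ne_zero.mpr hS.det_pos.ne')
  have hgrad : S *ᵥ ωstar = ((c - b * μ₀) / (a * c - b ^ 2)) • 1
      + ((a * μ₀ - b) / (a * c - b ^ 2)) • μ := by
    rw [hωstar, mulVec_add, mulVec_smul, mulVec_smul, mulVec_mulVec, mulVec_mulVec, hSinv,
      one_mulVec, one_mulVec]
  have hb' : μ ⬝ᵥ (S⁻¹ *ᵥ 1) = b := by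
    rw [hb, dotProduct_mulVec_comm_of_isSymm (isHermitian_iff_isSymm.mp hS.isHermitian.inv)]
  refine hS.dotProduct_mulVec_lt_of_mulVec_eq_smul_add_smul hgrad ?_ ?_ hne
  · rw [hω1, hωstar, dotProduct_add, dotProduct_smul, dotProduct_smul, ← ha, ← hb, smul_eq_mul,
      smul_eq_mul, div_mul_eq_mul_div, div_mul_eq_mul_div, ← add_div, eq_div_iff hdet]
    ring
  · rw [hωμ, hωstar, dotProduct_add, dotProduct_smul, dotProduct_smul, hb', ← hc, smul_eq_mul,
      smul_eq_mul, div_mul_eq_mul_div, div_mul_eq_mul_div, ← add_div, eq_div_iff hdet]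
    ring

/-- The candidate portfolio `ω*` solves the mean-variance optimisation problem:
ω* is the unique minimiser of the variance among feasible portfolios:
`ω*ᵀ Σ ω* < ωᵀ Σ ω` whenever `ω ≠ ω*`. -/
theorem mvo_candidate_unique_min (n : ℕ) (hn : 1 ≤ n)
    (S : Matrix (Fin n) (Fin n) ℝ) (hS : S.PosDef)
    (μ : Fin n → ℝ) (μ₀ : ℝ)
    (a b c : ℝ)
    (ha : a = (1 : Fin n → ℝ) ⬝ᵥ (S⁻¹ *ᵥ (1 : Fin n → ℝ)))
    (hb : b = (1 : Fin n → ℝ) ⬝ᵥ (S⁻¹ *ᵥ μ))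
    (hc : c = μ ⬝ᵥ (S⁻¹ *ᵥ μ))
    (hdet : a * c - b ^ 2 ≠ 0)
    (ωstar : Fin n → ℝ)
    (hωstar : ωstar = ((c - b * μ₀) / (a * c - b ^ 2)) • (S⁻¹ *ᵥ (1 : Fin n → ℝ))
            + ((a * μ₀ - b) / (a * c - b ^ 2)) • (S⁻¹ *ᵥ μ)) :
    ∀ ω : Fin n → ℝ, (1 : Fin n → ℝ) ⬝ᵥ ω = 1 → μ ⬝ᵥ ω = μ₀ → ω ≠ ωstar →
      ωstar ⬝ᵥ (S *ᵥ ωstar) < ω ⬝ᵥ (S *ᵥ ω) :=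
  mvo_candidate_unique_min_general n S hS μ μ₀ a b c ha hb hc hdet ωstar hωstar
end

section
/- The multi-stock HJB objective g attains its maximum over θ ∈ ℝᴺ uniquely at the vector θ* = (1/γ)(σσᵀ)⁻¹(μ − r𝟙)e^{−rτ} − (σᵀ)⁻¹h e^{−rτ}: for every θ ∈ ℝᴺ one has g(θ) ≤ g(θ*), with equality if and only if θ = θ*. (This is the optimal time-consistent investment policy in a multiple-stock market, consisting of a myopic demand and a hedging demand.) -/
open Real Matrix

/-!
The objective is a concave quadratic `θᵀb - (k/2) θᵀAθ` with `A = σσᵀ` positive definite (as `σ`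
is invertible) and `k = γ e^{2rτ} > 0`. The policy `θ*` solves the first-order condition
`k A θ* = b`, and completing the square gives `g θ - g θ* = -(k/2) (θ - θ*)ᵀ A (θ - θ*)`.
-/

namespace Matrix

variable {n 𝕜 : Type*} [Fintype n]

theorem IsSymm.dotProduct_mulVec_sub_dotProduct_mulVec [CommRing 𝕜] {A : Matrix n n 𝕜}
    (hA : A.IsSymm) (x y : n → 𝕜) :
    x ⬝ᵥ A *ᵥ x - y ⬝ᵥ A *ᵥ y = (x - y) ⬝ᵥ A *ᵥ (x - y) + 2 * ((x - y) ⬝ᵥ A *ᵥ y) := by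
  have hsymm : y ⬝ᵥ A *ᵥ x = x ⬝ᵥ A *ᵥ y := by
    rw [dotProduct_mulVec, ← vecMul_transpose, hA.eq, dotProduct_comm]
  simp only [mulVec_sub, dotProduct_sub, sub_dotProduct, hsymm]
  ring

theorem mulVec_nonsing_inv_mulVec [CommRing 𝕜] [DecidableEq n] {A : Matrix n n 𝕜}
    (hA : IsUnit A.det) (v : n → 𝕜) : A *ᵥ (A⁻¹ *ᵥ v) = v := by
  rw [mulVec_mulVec, mul_nonsing_inv _ hA, one_mulVec]

theorem mul_transpose_mulVec_transpose_inv_mulVec [CommRing 𝕜] [DecidableEq n]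
    {σ : Matrix n n 𝕜} (hσ : IsUnit σ.det) (w : n → 𝕜) : (σ * σᵀ) *ᵥ ((σᵀ)⁻¹ *ᵥ w) = σ *ᵥ w := by
  rw [mulVec_mulVec, mul_nonsing_inv_cancel_right _ _ (by rwa [det_transpose])]

section PosDef

variable [CommRing 𝕜] [PartialOrder 𝕜] [StarRing 𝕜] [TrivialStar 𝕜]

theorem PosDef.dotProduct_mulVec_self_nonneg {A : Matrix n n 𝕜} (hA : A.PosDef) (x : n → 𝕜) :
    0 ≤ x ⬝ᵥ A *ᵥ x := by
  simpa using hA.posSemidef.dotProduct_mulVec_nonneg x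

theorem PosDef.dotProduct_mulVec_self_eq_zero_iff {A : Matrix n n 𝕜} (hA : A.PosDef)
    {x : n → 𝕜} : x ⬝ᵥ A *ᵥ x = 0 ↔ x = 0 := by
  refine ⟨fun h ↦ ?_, fun h ↦ by simp [h]⟩
  by_contra hx
  simpa [h] using hA.dotProduct_mulVec_pos hx

end PosDef

variable [Field 𝕜] [LinearOrder 𝕜] [IsStrictOrderedRing 𝕜] [StarRing 𝕜] [TrivialStar 𝕜]

theorem PosDef.dotProduct_sub_quadratic_le {A : Matrix n n 𝕜} (hA : A.PosDef) {k : 𝕜}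
    (hk : 0 < k) {b x₀ : n → 𝕜} (hx₀ : k • (A *ᵥ x₀) = b) (x : n → 𝕜) :
    x ⬝ᵥ b - k / 2 * (x ⬝ᵥ A *ᵥ x) ≤ x₀ ⬝ᵥ b - k / 2 * (x₀ ⬝ᵥ A *ᵥ x₀) ∧
      (x ⬝ᵥ b - k / 2 * (x ⬝ᵥ A *ᵥ x) = x₀ ⬝ᵥ b - k / 2 * (x₀ ⬝ᵥ A *ᵥ x₀) ↔ x = x₀) := by
  have hA_symm : A.IsSymm := isHermitian_iff_isSymm.mp hA.isHermitian
  have hsquare : x ⬝ᵥ b - k / 2 * (x ⬝ᵥ A *ᵥ x) - (x₀ ⬝ᵥ b - k / 2 * (x₀ ⬝ᵥ A *ᵥ x₀))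
      = -(k / 2) * ((x - x₀) ⬝ᵥ A *ᵥ (x - x₀)) := by
    have hlin : x ⬝ᵥ b - x₀ ⬝ᵥ b = k * ((x - x₀) ⬝ᵥ A *ᵥ x₀) := by
      rw [← sub_dotProduct, ← hx₀, dotProduct_smul, smul_eq_mul]
    linear_combination hlin - k / 2 * hA_symm.dotProduct_mulVec_sub_dotProduct_mulVec x x₀
  have hq := hA.dotProduct_mulVec_self_nonneg (x - x₀)
  refine ⟨by nlinarith, fun heq ↦ ?_, fun h ↦ by rw [h]⟩
  rw [← sub_eq_zero, ← hA.dotProduct_mulVec_self_eq_zero_iff]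
  have : k / 2 ≠ 0 := by positivity
  simpa [this, sub_eq_zero.mpr heq] using hsquare.symm

end Matrix

theorem hjb_optimal_policy_multi_stock_general
    (N : ℕ)
    (σ : Matrix (Fin N) (Fin N) ℝ) (hσ : IsUnit σ.det)
    (μ : Fin N → ℝ) (r : ℝ) (γ : ℝ) (hγ : 0 < γ) (τ : ℝ)
    (h : Fin N → ℝ)
    (g : (Fin N → ℝ) → ℝ)
    (hg : ∀ θ : Fin N → ℝ, g θ = (θ ⬝ᵥ (μ - r • (1 : Fin N → ℝ))) * exp (r * τ)
        - (γ / 2) * ((θ ⬝ᵥ ((σ * σᵀ) *ᵥ θ)) * exp (2 * (r * τ))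
            + 2 * (θ ⬝ᵥ (σ *ᵥ h)) * exp (r * τ)))
    (θstar : Fin N → ℝ)
    (hθstar : θstar = (exp (-(r * τ)) / γ) • ((σ * σᵀ)⁻¹ *ᵥ (μ - r • (1 : Fin N → ℝ)))
        - exp (-(r * τ)) • ((σᵀ)⁻¹ *ᵥ h)) :
    ∀ θ : Fin N → ℝ, g θ ≤ g θstar ∧ (g θ = g θstar ↔ θ = θstar) := by
  set c := exp (r * τ) with hc_def
  set m := μ - r • (1 : Fin N → ℝ)
  have hc : 0 < c := exp_pos _
  have hA : (σ * σᵀ).PosDef := by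
    simpa using PosDef.mul_conjTranspose_self σ
      (vecMul_injective_of_isUnit ((isUnit_iff_isUnit_det σ).mpr hσ))
  have hg_quadratic : ∀ θ, g θ =
      θ ⬝ᵥ (c • m - (γ * c) • (σ *ᵥ h)) - γ * c ^ 2 / 2 * (θ ⬝ᵥ (σ * σᵀ) *ᵥ θ) := by
    intro θ
    rw [hg, show exp (2 * (r * τ)) = c ^ 2 by rw [← exp_nat_mul]; norm_num]
    simp only [dotProduct_sub, dotProduct_smul, smul_eq_mul]
    ring
  have hfoc : (γ * c ^ 2) • ((σ * σᵀ) *ᵥ θstar) = c • m - (γ * c) • (σ *ᵥ h) := by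
    have hA_det : IsUnit (σ * σᵀ).det := by rw [det_mul, det_transpose]; exact hσ.mul hσ
    rw [hθstar, mulVec_sub, mulVec_smul, mulVec_smul, mulVec_nonsing_inv_mulVec hA_det,
      mul_transpose_mulVec_transpose_inv_mulVec hσ, exp_neg, ← hc_def, smul_sub, smul_smul,
      smul_smul]
    congr 2 <;> field_simp
  intro θ
  simpa only [hg_quadratic] using hA.dotProduct_sub_quadratic_le (by positivity) hfoc θ

/-- The multi-stock HJB objective
`g(θ) = θᵀ(μ − r𝟙)e^{rτ} − (γ/2)[θᵀ(σσᵀ)θ e^{2rτ} + 2θᵀσh e^{rτ}]`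
attains its maximum over `θ ∈ ℝᴺ` uniquely at the optimal time-consistent
policy `θ* = (1/γ)(σσᵀ)⁻¹(μ − r𝟙)e^{−rτ} − (σᵀ)⁻¹h e^{−rτ}`
(myopic demand plus hedging demand). -/
theorem hjb_optimal_policy_multi_stock
    (N : ℕ) (hN : 1 ≤ N)
    (σ : Matrix (Fin N) (Fin N) ℝ) (hσ : IsUnit σ.det)
    (μ : Fin N → ℝ) (r : ℝ) (γ : ℝ) (hγ : 0 < γ) (τ : ℝ) (hτ : 0 ≤ τ)
    (h : Fin N → ℝ)
    (g : (Fin N → ℝ) → ℝ)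
    (hg : ∀ θ : Fin N → ℝ, g θ = (θ ⬝ᵥ (μ - r • (1 : Fin N → ℝ))) * exp (r * τ)
        - (γ / 2) * ((θ ⬝ᵥ ((σ * σᵀ) *ᵥ θ)) * exp (2 * (r * τ))
            + 2 * (θ ⬝ᵥ (σ *ᵥ h)) * exp (r * τ)))
    (θstar : Fin N → ℝ)
    (hθstar : θstar = (exp (-(r * τ)) / γ) • ((σ * σᵀ)⁻¹ *ᵥ (μ - r • (1 : Fin N → ℝ)))
        - exp (-(r * τ)) • ((σᵀ)⁻¹ *ᵥ h)) :
    ∀ θ : Fin N → ℝ, g θ ≤ g θstar ∧ (g θ = g θstar ↔ θ = θstar) :=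
  hjb_optimal_policy_multi_stock_general N σ hσ μ r γ hγ τ h g hg θstar hθstar
end

section
/- Ŵ is the optimal terminal wealth of the mean-variance optimizer under precommitment: for every square-integrable random variable W with E[ξW] ≤ W₀, one has E[W] − (γ/2)Var[W] ≤ E[Ŵ] − (γ/2)Var[Ŵ]. -/
open MeasureTheory ProbabilityTheory Real

/-!
With `c = e^{rT}/γ`, so that `γ c E[ξ] = 1`, expanding
`Var(W + cξ) = Var W + 2c Cov(W, ξ) + c² Var ξ` gives
`U(W) = e^{rT} E[ξW] + (γ/2) c² Var ξ − (γ/2) Var(W + cξ)`.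
The first term is at most `e^{rT} W₀` under the budget constraint and the last one is
nonpositive; `Ŵ = K − cξ` attains both bounds, as `Ŵ + cξ` is constant and `E[ξŴ] = W₀`.
-/

section MeanVariance

variable {Ω : Type*} [MeasurableSpace Ω] {P : Measure Ω} [IsProbabilityMeasure P]
  {γ c : ℝ} {X ξ : Ω → ℝ}

noncomputable def meanVariance (γ : ℝ) (X : Ω → ℝ) (P : Measure Ω) : ℝ :=
  ∫ ω, X ω ∂P - γ / 2 * variance X P

lemma meanVariance_eq (hX : MemLp X 2 P) (hξ : MemLp ξ 2 P) (hc : γ * c * ∫ ω, ξ ω ∂P = 1) :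
    meanVariance γ X P = γ * c * ∫ ω, ξ ω * X ω ∂P + γ / 2 * c ^ 2 * variance ξ P
      - γ / 2 * variance (fun ω ↦ X ω + c * ξ ω) P := by
  have hcov : cov[X, ξ; P] = ∫ ω, ξ ω * X ω ∂P - (∫ ω, X ω ∂P) * ∫ ω, ξ ω ∂P := by
    simp only [covariance_eq_sub hX hξ, Pi.mul_apply, mul_comm (X _)]
  rw [meanVariance, variance_fun_add hX (hξ.const_mul c), variance_const_mul,
    covariance_const_mul_right, hcov]
  linear_combination -(∫ ω, X ω ∂P) * hc

lemma meanVariance_le (hγ : 0 ≤ γ) (hX : MemLp X 2 P) (hξ : MemLp ξ 2 P)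
    (hc : γ * c * ∫ ω, ξ ω ∂P = 1) :
    meanVariance γ X P ≤ γ * c * ∫ ω, ξ ω * X ω ∂P + γ / 2 * c ^ 2 * variance ξ P := by
  rw [meanVariance_eq hX hξ hc]
  have := variance_nonneg (fun ω ↦ X ω + c * ξ ω) P
  nlinarith

lemma meanVariance_const_sub (hξ : MemLp ξ 2 P) (hc : γ * c * ∫ ω, ξ ω ∂P = 1) (K : ℝ) :
    meanVariance γ (fun ω ↦ K - c * ξ ω) P
      = γ * c * ∫ ω, ξ ω * (K - c * ξ ω) ∂P + γ / 2 * c ^ 2 * variance ξ P := by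
  have hconst : (fun ω ↦ K - c * ξ ω + c * ξ ω) = fun _ ↦ K := by
    funext ω; ring
  have hK : MemLp (fun ω ↦ K - c * ξ ω) 2 P := (memLp_const K).sub (hξ.const_mul c)
  rw [meanVariance_eq hK hξ hc, hconst, variance_eq_sub (memLp_const K)]
  simp

theorem meanVariance_le_const_sub (hγ : 0 ≤ γ) (hγc : 0 ≤ γ * c) (hX : MemLp X 2 P)
    (hξ : MemLp ξ 2 P) (hc : γ * c * ∫ ω, ξ ω ∂P = 1) (K : ℝ)
    (hbudget : ∫ ω, ξ ω * X ω ∂P ≤ ∫ ω, ξ ω * (K - c * ξ ω) ∂P) :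
    meanVariance γ X P ≤ meanVariance γ (fun ω ↦ K - c * ξ ω) P := by
  rw [meanVariance_const_sub hξ hc]
  grw [meanVariance_le hγ hX hξ hc, hbudget]

end MeanVariance

theorem precommitment_optimal_general
    {Ω : Type*} [MeasurableSpace Ω] (P : Measure Ω) [IsProbabilityMeasure P]
    (T r γ W₀ : ℝ) (hγ : 0 < γ)
    (ξ : Ω → ℝ) (hξ : MemLp ξ 2 P)
    (hξmean : ∫ ω, ξ ω ∂P = exp (-(r * T)))
    (What : Ω → ℝ)
    (hWhat : ∀ ω, What ω = W₀ * exp (r * T)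
        + (1 / γ) * (∫ ω', (ξ ω') ^ 2 ∂P) * exp (2 * (r * T))
        - (1 / γ) * ξ ω * exp (r * T)) :
    ∀ W : Ω → ℝ, MemLp W 2 P → (∫ ω, ξ ω * W ω ∂P) ≤ W₀ →
      (∫ ω, W ω ∂P) - (γ / 2) * variance W P
        ≤ (∫ ω, What ω ∂P) - (γ / 2) * variance What P := by
  intro W hW hbudget
  set c := exp (r * T) / γ
  set K := W₀ * exp (r * T) + (1 / γ) * (∫ ω, ξ ω ^ 2 ∂P) * exp (2 * (r * T))
  have hγc : γ * c = exp (r * T) := mul_div_cancel₀ _ hγ.ne'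
  have hexp : exp (r * T) * exp (-(r * T)) = 1 := by rw [← exp_add, add_neg_cancel, exp_zero]
  have hc : γ * c * ∫ ω, ξ ω ∂P = 1 := by rw [hγc, hξmean, hexp]
  obtain rfl : What = fun ω ↦ K - c * ξ ω := funext fun ω ↦ by rw [hWhat]; ring
  have hbudgetWhat : ∫ ω, ξ ω * (K - c * ξ ω) ∂P = W₀ := by
    have hξ2 : Integrable (fun ω ↦ c * ξ ω ^ 2) P := hξ.integrable_sq.const_mul c
    simp_rw [mul_sub, mul_left_comm (ξ _) c, ← sq]
    rw [integral_sub ((hξ.integrable one_le_two).mul_const K) hξ2, integral_mul_const,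
      integral_const_mul, hξmean]
    simp only [K, c, two_mul, exp_add]
    field_simp
    linear_combination (W₀ * γ + (∫ ω, ξ ω ^ 2 ∂P) * exp (r * T)) * hexp
  exact meanVariance_le_const_sub hγ.le (hγc ▸ (exp_pos _).le) hW hξ hc K
    (hbudget.trans_eq hbudgetWhat.symm)

/-- `Ŵ` is the optimal terminal wealth of the mean-variance optimizer under
precommitment: for every square-integrable `W` with `E[ξW] ≤ W₀`,
`E[W] − (γ/2)Var[W] ≤ E[Ŵ] − (γ/2)Var[Ŵ]`. -/
theorem precommitment_optimal
    {Ω : Type*} [MeasurableSpace Ω] (P : Measure Ω) [IsProbabilityMeasure P]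
    (T r γ W₀ : ℝ) (hT : 0 < T) (hγ : 0 < γ)
    (ξ : Ω → ℝ) (hξ : MemLp ξ 2 P)
    (hξpos : ∀ᵐ ω ∂P, 0 < ξ ω)
    (hξmean : ∫ ω, ξ ω ∂P = exp (-(r * T)))
    (What : Ω → ℝ)
    (hWhat : ∀ ω, What ω = W₀ * exp (r * T)
        + (1 / γ) * (∫ ω', (ξ ω') ^ 2 ∂P) * exp (2 * (r * T))
        - (1 / γ) * ξ ω * exp (r * T)) :
    ∀ W : Ω → ℝ, MemLp W 2 P → (∫ ω, ξ ω * W ω ∂P) ≤ W₀ →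
      (∫ ω, W ω ∂P) - (γ / 2) * variance W P
        ≤ (∫ ω, What ω ∂P) - (γ / 2) * variance What P :=
  precommitment_optimal_general P T r γ W₀ hγ ξ hξ hξmean What hWhat
end

section
/- The optimal value of the precommitment mean-variance problem is U(Ŵ) = E[Ŵ] − (γ/2)Var[Ŵ] = W₀e^{rT} + (1/(2γ))e^{2rT}Var[ξ]. -/
/-!
`Ŵ = c - a ξ` is an affine function of the state price density, so `E[Ŵ] = c - a E[ξ]` and
`Var[Ŵ] = a² Var[ξ]`; with `E[ξ] = e^{-rT}` and `Var[ξ] = E[ξ²] - e^{-2rT}` the value is algebra.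
-/

open MeasureTheory ProbabilityTheory Real

section AffinePosition

variable {Ω : Type*} [MeasurableSpace Ω] {μ : Measure Ω} [IsProbabilityMeasure μ] {X : Ω → ℝ}

lemma integral_const_sub_mul (hX : Integrable X μ) (c a : ℝ) :
    ∫ ω, (c - a * X ω) ∂μ = c - a * ∫ ω, X ω ∂μ := by
  rw [integral_sub (integrable_const c) (hX.const_mul a), integral_const, integral_const_mul]
  simp

lemma variance_const_sub_mul (hX : AEStronglyMeasurable X μ) (c a : ℝ) :
    variance (fun ω => c - a * X ω) μ = a ^ 2 * variance X μ := by
  rw [variance_const_sub (hX.const_mul a), variance_const_mul]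

lemma integral_sub_mul_variance_const_sub_mul (hX : Integrable X μ) (γ c a : ℝ) :
    (∫ ω, (c - a * X ω) ∂μ) - (γ / 2) * variance (fun ω => c - a * X ω) μ
      = c - a * (∫ ω, X ω ∂μ) - (γ / 2) * a ^ 2 * variance X μ := by
  rw [integral_const_sub_mul hX, variance_const_sub_mul hX.aestronglyMeasurable]
  ring

end AffinePosition

theorem precommitment_optimal_value_general
    {Ω : Type*} [MeasurableSpace Ω] (P : Measure Ω) [IsProbabilityMeasure P]
    (T r γ W₀ : ℝ)
    (ξ : Ω → ℝ) (hξ : MemLp ξ 2 P)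
    (hξmean : ∫ ω, ξ ω ∂P = exp (-(r * T)))
    (What : Ω → ℝ)
    (hWhat : ∀ ω, What ω = W₀ * exp (r * T)
        + (1 / γ) * (∫ ω', (ξ ω') ^ 2 ∂P) * exp (2 * (r * T))
        - (1 / γ) * ξ ω * exp (r * T)) :
    (∫ ω, What ω ∂P) - (γ / 2) * variance What P
      = W₀ * exp (r * T) + (1 / (2 * γ)) * exp (2 * (r * T)) * variance ξ P := by
  set m₂ := ∫ ω, ξ ω ^ 2 ∂P
  have hWhat_affine : What = fun ω => (W₀ * exp (r * T) + γ⁻¹ * m₂ * exp (2 * (r * T)))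
      - γ⁻¹ * exp (r * T) * ξ ω := by
    funext ω
    rw [hWhat ω]
    ring
  have hvar : variance ξ P = m₂ - exp (-(r * T)) ^ 2 := by
    rw [variance_eq_sub hξ, ← hξmean]
    rfl
  have hexp_neg : exp (r * T) * exp (-(r * T)) = 1 := by rw [← exp_add, add_neg_cancel, exp_zero]
  have hexp_two : exp (2 * (r * T)) = exp (r * T) ^ 2 := by rw [← exp_nat_mul]; norm_num
  -- `γ * γ⁻¹ = 1` fails at `γ = 0`, but this identity does not.
  have hinv : γ⁻¹ * γ⁻¹ * γ = γ⁻¹ := by simpa only [inv_inv] using mul_self_mul_inv γ⁻¹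
  rw [hWhat_affine, integral_sub_mul_variance_const_sub_mul (hξ.integrable one_le_two), hξmean,
    hvar, hexp_two]
  linear_combination (-(exp (r * T) ^ 2 * (m₂ - exp (-(r * T)) ^ 2)) / 2) * hinv
    + γ⁻¹ * exp (r * T) * exp (-(r * T)) * hexp_neg

/-- The optimal value of the precommitment mean-variance problem:
`U(Ŵ) = E[Ŵ] − (γ/2)Var[Ŵ] = W₀e^{rT} + (1/(2γ))e^{2rT}Var[ξ]`. -/
theorem precommitment_optimal_value
    {Ω : Type*} [MeasurableSpace Ω] (P : Measure Ω) [IsProbabilityMeasure P]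
    (T r γ W₀ : ℝ) (hT : 0 < T) (hγ : 0 < γ)
    (ξ : Ω → ℝ) (hξ : MemLp ξ 2 P)
    (hξpos : ∀ᵐ ω ∂P, 0 < ξ ω)
    (hξmean : ∫ ω, ξ ω ∂P = exp (-(r * T)))
    (What : Ω → ℝ)
    (hWhat : ∀ ω, What ω = W₀ * exp (r * T)
        + (1 / γ) * (∫ ω', (ξ ω') ^ 2 ∂P) * exp (2 * (r * T))
        - (1 / γ) * ξ ω * exp (r * T)) :
    (∫ ω, What ω ∂P) - (γ / 2) * variance What P
      = W₀ * exp (r * T) + (1 / (2 * γ)) * exp (2 * (r * T)) * variance ξ P :=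
  precommitment_optimal_value_general P T r γ W₀ ξ hξ hξmean What hWhat
end

section
/- Under a constant market price of risk, E[Ŵ] = W₀e^{rT} + (1/γ)(e^{λ²T} − 1), and if λ ≠ 0 then the precommitment wealth dominates the time-consistent wealth in expectation: E[Ŵ] > E[W*]. -/
open MeasureTheory ProbabilityTheory Real

/-!
Both expectations reduce to Gaussian moments of `X`: `E[X] = 0` and the moment generating
function `E[exp (t X)] = exp (T t² / 2)`. The latter makes the state-price term
`exp (-λ²T/2 - λX)` have mean one, so `E[Ŵ] - W₀e^{rT} = (e^{λ²T} - 1)/γ`, while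
`E[W*] - W₀e^{rT} = λ²T/γ`; the comparison is `1 + x < eˣ` at `x = λ²T > 0`.
-/

section GaussianLaw

variable {Ω : Type*} [MeasurableSpace Ω] {P : Measure Ω} {X : Ω → ℝ} {μ : ℝ} {v : NNReal}

lemma hasGaussianLaw_of_map_eq_gaussianReal (hX : P.map X = gaussianReal μ v) :
    HasGaussianLaw X P :=
  ⟨by rw [hX]; infer_instance⟩

lemma integrable_of_map_eq_gaussianReal (hX : P.map X = gaussianReal μ v) : Integrable X P :=
  (hasGaussianLaw_of_map_eq_gaussianReal hX).integrable

lemma integral_of_map_eq_gaussianReal (hX : P.map X = gaussianReal μ v) :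
    ∫ ω, X ω ∂P = μ := by
  rw [← integral_map (f := fun x ↦ x) (hasGaussianLaw_of_map_eq_gaussianReal hX).aemeasurable
    aestronglyMeasurable_id, hX, integral_id_gaussianReal]

lemma integrable_exp_add_mul_of_map_eq_gaussianReal (hX : P.map X = gaussianReal μ v)
    (a b : ℝ) : Integrable (fun ω ↦ exp (a + b * X ω)) P := by
  have := (hasGaussianLaw_of_map_eq_gaussianReal hX).isProbabilityMeasure
  simp_rw [exp_add]
  refine Integrable.const_mul ?_ _
  rw [← mgf_pos_iff, mgf_gaussianReal hX]
  exact exp_pos _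

lemma integral_exp_add_mul_of_map_eq_gaussianReal (hX : P.map X = gaussianReal μ v)
    (a b : ℝ) : ∫ ω, exp (a + b * X ω) ∂P = exp (a + μ * b + v * b ^ 2 / 2) := by
  simp_rw [exp_add, integral_const_mul]
  rw [← mgf, mgf_gaussianReal hX, exp_add, mul_assoc]

end GaussianLaw

theorem constant_sharpe_precommitment_dominates_in_mean_general
    {Ω : Type*} [MeasurableSpace Ω] (P : Measure Ω) [IsProbabilityMeasure P]
    (T r γ W₀ l : ℝ) (hT : 0 < T) (hγ : 0 < γ)
    (X : Ω → ℝ)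
    (hlaw : P.map X = gaussianReal 0 T.toNNReal)
    (What : Ω → ℝ)
    (hWhat : ∀ ω, What ω = W₀ * exp (r * T) + (1 / γ) * exp (l ^ 2 * T)
        - (1 / γ) * exp (-(l ^ 2 * T / 2) - l * X ω))
    (Wstar : Ω → ℝ)
    (hWstar : ∀ ω, Wstar ω = W₀ * exp (r * T) + (1 / γ) * l ^ 2 * T
        - (1 / γ) * l * X ω) :
    (∫ ω, What ω ∂P) = W₀ * exp (r * T) + (1 / γ) * (exp (l ^ 2 * T) - 1)
      ∧ (l ≠ 0 → (∫ ω, Wstar ω ∂P) < ∫ ω, What ω ∂P) := by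
  have hdensity (ω : Ω) : -(l ^ 2 * T / 2) - l * X ω = -(l ^ 2 * T / 2) + -l * X ω := by ring
  have hdensity_int : Integrable (fun ω ↦ exp (-(l ^ 2 * T / 2) - l * X ω)) P := by
    simpa only [hdensity] using integrable_exp_add_mul_of_map_eq_gaussianReal hlaw _ (-l)
  have hdensity_mean : ∫ ω, exp (-(l ^ 2 * T / 2) - l * X ω) ∂P = 1 := by
    simp_rw [hdensity, integral_exp_add_mul_of_map_eq_gaussianReal hlaw,
      Real.coe_toNNReal T hT.le]
    rw [← exp_zero]
    ring_nf
  have hWhat_mean : ∫ ω, What ω ∂P = W₀ * exp (r * T) + (1 / γ) * (exp (l ^ 2 * T) - 1) := by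
    simp_rw [hWhat]
    rw [integral_sub (integrable_const _) (hdensity_int.const_mul _), integral_const,
      integral_const_mul, hdensity_mean]
    simp only [probReal_univ, one_smul]
    ring
  refine ⟨hWhat_mean, fun hl ↦ ?_⟩
  have hWstar_mean : ∫ ω, Wstar ω ∂P = W₀ * exp (r * T) + (1 / γ) * l ^ 2 * T := by
    simp_rw [hWstar]
    rw [integral_sub (integrable_const _)
      ((integrable_of_map_eq_gaussianReal hlaw).const_mul _), integral_const,
      integral_const_mul, integral_of_map_eq_gaussianReal hlaw]
    simp
  have hexp : l ^ 2 * T + 1 < exp (l ^ 2 * T) := add_one_lt_exp (by positivity)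
  rw [hWhat_mean, hWstar_mean]
  have hγ_inv : 0 < 1 / γ := by positivity
  nlinarith

/-- Under a constant market price of risk `l = (μ − r)/σ`,
`E[Ŵ] = W₀e^{rT} + (1/γ)(e^{l²T} − 1)`, and if `l ≠ 0` the precommitment
wealth dominates the time-consistent wealth in expectation: `E[Ŵ] > E[W*]`. -/
theorem constant_sharpe_precommitment_dominates_in_mean
    {Ω : Type*} [MeasurableSpace Ω] (P : Measure Ω) [IsProbabilityMeasure P]
    (T r γ W₀ l : ℝ) (hT : 0 < T) (hγ : 0 < γ)
    (X : Ω → ℝ) (hX : Measurable X)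
    (hlaw : P.map X = gaussianReal 0 T.toNNReal)
    (What : Ω → ℝ)
    (hWhat : ∀ ω, What ω = W₀ * exp (r * T) + (1 / γ) * exp (l ^ 2 * T)
        - (1 / γ) * exp (-(l ^ 2 * T / 2) - l * X ω))
    (Wstar : Ω → ℝ)
    (hWstar : ∀ ω, Wstar ω = W₀ * exp (r * T) + (1 / γ) * l ^ 2 * T
        - (1 / γ) * l * X ω) :
    (∫ ω, What ω ∂P) = W₀ * exp (r * T) + (1 / γ) * (exp (l ^ 2 * T) - 1)
      ∧ (l ≠ 0 → (∫ ω, Wstar ω ∂P) < ∫ ω, What ω ∂P) :=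
  constant_sharpe_precommitment_dominates_in_mean_general P T r γ W₀ l hT hγ X hlaw What hWhat Wstar
    hWstar
end
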